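/- Let A be an accretive bounded linear operator on a Hilbert space H, and let u ∈ H with u not in the range of A and u not in the nullspace of A. For β > 0 set φ_β = (A + βI)⁻¹u / ‖(A + βI)⁻¹u‖. Then for every real number ε with 0 < ε < ‖Au‖/‖u‖ there exists β > 0 such that ‖A φ_β‖ = ε. -/

import Mathlib

/-!
Write `R β = (A + β)⁻¹` and `g β = ‖A (R β u)‖ / ‖R β u‖ = ‖A φ_β‖`, a continuous function of
`β > 0`. As `β → ∞`, `β R β u = u - R β (A u) → u` since `‖R β‖ ≤ 1/β`, so `g β → ‖A u‖ / ‖u‖ > ε`.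
As `β → 0`, `g` must drop to `ε` or below: otherwise `R β u` stays bounded, and accretivity applied
to `R β u - R γ u` gives `(β + γ) ‖R β u - R γ u‖² ≤ (β - γ) (‖R γ u‖² - ‖R β u‖²)`, so `‖R β u‖`
increases as `β ↓ 0` and `R β u` is Cauchy; its limit `w` satisfies `A w = u`, contradicting
`u ∉ range A`. The intermediate value theorem finishes the proof.
-/

open Filter Set RCLike
open scoped Topology

theorem cauchySeq_of_dist_sq_le {X : Type*} [PseudoMetricSpace X] {x : ℕ → X} {a : ℕ → ℝ}
    (ha : CauchySeq a) (h : ∀ m n, dist (x m) (x n) ^ 2 ≤ dist (a m) (a n)) : CauchySeq x := by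
  rw [Metric.cauchySeq_iff] at ha ⊢
  intro ε hε
  obtain ⟨N, hN⟩ := ha (ε ^ 2) (by positivity)
  refine ⟨N, fun m hm n hn => ?_⟩
  exact lt_of_pow_lt_pow_left₀ 2 hε.le ((h m n).trans_lt (hN m hm n hn))

section

variable {𝕜 : Type*} [RCLike 𝕜] {E F : Type*} [NormedAddCommGroup E] [NormedSpace 𝕜 E]
  [NormedAddCommGroup F] [NormedSpace 𝕜 F]

theorem ContinuousLinearMap.norm_map_inv_norm_smul (A : E →L[𝕜] F) (v : E) :
    ‖A ((‖v‖ : 𝕜)⁻¹ • v)‖ = ‖A v‖ / ‖v‖ := by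
  rw [map_smul, norm_smul, norm_inv, norm_ofReal, abs_norm, inv_mul_eq_div]

theorem ContinuousLinearMap.norm_map_smul_div_norm_smul (A : E →L[𝕜] F) {c : 𝕜} (hc : c ≠ 0)
    (v : E) : ‖A (c • v)‖ / ‖c • v‖ = ‖A v‖ / ‖v‖ := by
  rw [map_smul, norm_smul, norm_smul, mul_div_mul_left _ _ (norm_ne_zero_iff.mpr hc)]

end

section

variable {𝕜 : Type*} [RCLike 𝕜] {H : Type*} [NormedAddCommGroup H] [InnerProductSpace 𝕜 H]

def IsAccretive (A : H →L[𝕜] H) : Prop :=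
  ∀ v : H, 0 ≤ re (inner 𝕜 (A v) v)

def IsResolventFamily (A : H →L[𝕜] H) (R : ℝ → H →L[𝕜] H) : Prop :=
  ∀ γ : ℝ, 0 < γ → (A + (γ : 𝕜) • (1 : H →L[𝕜] H)).comp (R γ) = 1 ∧
    (R γ).comp (A + (γ : 𝕜) • (1 : H →L[𝕜] H)) = 1

variable {A : H →L[𝕜] H}

namespace IsAccretive

variable (hA : IsAccretive A)
include hA

theorem mul_norm_le_norm_add_smul (γ : ℝ) (y : H) :
    γ * ‖y‖ ≤ ‖A y + (γ : 𝕜) • y‖ := by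
  have hre : γ * ‖y‖ ^ 2 ≤ ‖A y + (γ : 𝕜) • y‖ * ‖y‖ := by
    calc γ * ‖y‖ ^ 2 ≤ re (inner 𝕜 (A y) y) + γ * ‖y‖ ^ 2 := le_add_of_nonneg_left (hA y)
      _ = re (inner 𝕜 (A y + (γ : 𝕜) • y) y) := by
        simp only [inner_add_left, inner_smul_left, conj_ofReal, map_add,
          inner_self_eq_norm_sq_to_K, re_ofReal_mul, ← ofReal_pow, ofReal_re]
      _ ≤ ‖A y + (γ : 𝕜) • y‖ * ‖y‖ := re_inner_le_norm _ _
  rcases (norm_nonneg y).eq_or_lt with hy | hy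
  · rw [← hy, mul_zero]; exact norm_nonneg _
  · nlinarith

theorem add_mul_norm_sub_sq_le {β γ : ℝ} {x y : H}
    (h : A x + (β : 𝕜) • x = A y + (γ : 𝕜) • y) :
    (β + γ) * ‖x - y‖ ^ 2 ≤ (β - γ) * (‖y‖ ^ 2 - ‖x‖ ^ 2) := by
  have hAxy : A (x - y) = (γ : 𝕜) • y - (β : 𝕜) • x := by
    rw [map_sub]; linear_combination (norm := module) h
  have hacc := hA (x - y)
  have hsymm : re (inner 𝕜 y x) = re (inner 𝕜 x y) := by rw [← inner_conj_symm, conj_re]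
  rw [hAxy] at hacc
  simp only [inner_sub_left, inner_sub_right, inner_smul_left, conj_ofReal, map_sub,
    inner_self_eq_norm_sq_to_K, re_ofReal_mul, ← ofReal_pow, ofReal_re, hsymm] at hacc
  rw [norm_sub_sq (𝕜 := 𝕜)]
  linarith

end IsAccretive

variable {R : ℝ → H →L[𝕜] H}

namespace IsResolventFamily

variable (hR : IsResolventFamily A R)
include hR

theorem apply_add_smul {γ : ℝ} (hγ : 0 < γ) (x : H) : A (R γ x) + (γ : 𝕜) • R γ x = x := by
  simpa using congrArg (fun T : H →L[𝕜] H => T x) (hR γ hγ).1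

theorem map_apply_add_smul {γ : ℝ} (hγ : 0 < γ) (x : H) : R γ (A x + (γ : 𝕜) • x) = x := by
  simpa using congrArg (fun T : H →L[𝕜] H => T x) (hR γ hγ).2

theorem apply_eq_sub_smul {γ : ℝ} (hγ : 0 < γ) (x : H) : A (R γ x) = x - (γ : 𝕜) • R γ x :=
  eq_sub_of_add_eq (hR.apply_add_smul hγ x)

theorem apply_ne_zero {γ : ℝ} (hγ : 0 < γ) {x : H} (hx : x ≠ 0) : R γ x ≠ 0 := by
  intro h
  apply hx
  simpa [h] using (hR.apply_add_smul hγ x).symm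

theorem continuousOn_apply [CompleteSpace H] (u : H) :
    ContinuousOn (fun γ : ℝ => R γ u) (Ioi 0) := by
  have hshift : Continuous (fun γ : ℝ => A + (γ : 𝕜) • (1 : H →L[𝕜] H)) := by fun_prop
  intro γ (hγ : 0 < γ)
  let U : (H →L[𝕜] H)ˣ := ⟨_, R γ, (hR γ hγ).1, (hR γ hγ).2⟩
  have hinverse : ∀ β ∈ Ioi (0 : ℝ), Ring.inverse (A + (β : 𝕜) • (1 : H →L[𝕜] H)) = R β :=
    fun β hβ => Ring.inverse_unit ⟨_, R β, (hR β hβ).1, (hR β hβ).2⟩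
  have hcont : ContinuousAt (fun β : ℝ => Ring.inverse (A + (β : 𝕜) • (1 : H →L[𝕜] H))) γ :=
    (NormedRing.inverse_continuousAt U).comp (x := γ) (g := Ring.inverse) hshift.continuousAt
  replace hcont := hcont.clm_apply (continuousAt_const (y := u))
  exact hcont.continuousWithinAt.congr (fun β hβ => by rw [hinverse β hβ])
    (by rw [hinverse γ hγ])

variable (hA : IsAccretive A)
include hA

theorem norm_apply_le_div {γ : ℝ} (hγ : 0 < γ) (x : H) : ‖R γ x‖ ≤ ‖x‖ / γ := by
  rw [le_div_iff₀' hγ]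
  simpa only [hR.apply_add_smul hγ] using hA.mul_norm_le_norm_add_smul γ (R γ x)

theorem add_mul_norm_sub_sq_le {β γ : ℝ} (hβ : 0 < β) (hγ : 0 < γ) (u : H) :
    (β + γ) * ‖R β u - R γ u‖ ^ 2 ≤ (β - γ) * (‖R γ u‖ ^ 2 - ‖R β u‖ ^ 2) :=
  hA.add_mul_norm_sub_sq_le (by rw [hR.apply_add_smul hβ, hR.apply_add_smul hγ])

theorem antitoneOn_norm_apply (u : H) : AntitoneOn (fun γ => ‖R γ u‖) (Ioi 0) := by
  intro γ (hγ : 0 < γ) β (hβ : 0 < β) hγβ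
  have h := hR.add_mul_norm_sub_sq_le hA hβ hγ u
  have hsq : ‖R β u‖ ^ 2 ≤ ‖R γ u‖ ^ 2 := by
    rcases hγβ.eq_or_lt with rfl | hlt
    · rfl
    · nlinarith [sq_nonneg ‖R β u - R γ u‖]
  exact (pow_le_pow_iff_left₀ (norm_nonneg _) (norm_nonneg _) two_ne_zero).mp hsq

theorem norm_apply_sub_apply_sq_le {β γ : ℝ} (hβ : 0 < β) (hγ : 0 < γ) (u : H) :
    ‖R β u - R γ u‖ ^ 2 ≤ |‖R β u‖ ^ 2 - ‖R γ u‖ ^ 2| := by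
  have h := hR.add_mul_norm_sub_sq_le hA hβ hγ u
  have hβγ : |β - γ| ≤ β + γ := abs_sub_le_iff.mpr ⟨by linarith, by linarith⟩
  refine le_of_mul_le_mul_left ?_ (add_pos hβ hγ)
  calc (β + γ) * ‖R β u - R γ u‖ ^ 2 ≤ |β - γ| * |‖R γ u‖ ^ 2 - ‖R β u‖ ^ 2| :=
        h.trans ((le_abs_self _).trans (abs_mul _ _).le)
    _ ≤ (β + γ) * |‖R β u‖ ^ 2 - ‖R γ u‖ ^ 2| := by
        rw [abs_sub_comm (‖R β u‖ ^ 2)]; exact mul_le_mul_of_nonneg_right hβγ (abs_nonneg _)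

theorem mem_range_of_norm_le [CompleteSpace H] {b C : ℝ} (hb : 0 < b) {u : H}
    (hC : ∀ γ ∈ Ioc 0 b, ‖R γ u‖ ≤ C) : u ∈ range A := by
  obtain ⟨s, hs_anti, hs_mem, hs_lim⟩ := exists_seq_strictAnti_tendsto' hb
  have hs_pos (n : ℕ) : 0 < s n := (hs_mem n).1
  set x : ℕ → H := fun n => R (s n) u
  have hx_mono : Monotone fun n => ‖x n‖ := fun m n hmn =>
    hR.antitoneOn_norm_apply hA u (hs_pos n) (hs_pos m) (hs_anti.antitone hmn)
  have hx_bdd : BddAbove (range fun n => ‖x n‖) := by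
    refine ⟨C, ?_⟩
    rintro _ ⟨n, rfl⟩
    exact hC _ ⟨hs_pos n, (hs_mem n).2.le⟩
  have hx_cauchy : CauchySeq x := by
    refine cauchySeq_of_dist_sq_le ((tendsto_atTop_ciSup hx_mono hx_bdd).pow 2).cauchySeq
      fun m n => ?_
    rw [dist_eq_norm, Real.dist_eq]
    exact hR.norm_apply_sub_apply_sq_le hA (hs_pos m) (hs_pos n) u
  obtain ⟨w, hw⟩ := cauchySeq_tendsto_of_complete hx_cauchy
  refine ⟨w, tendsto_nhds_unique ((A.continuous.tendsto w).comp hw) ?_⟩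
  have hAx : ⇑A ∘ x = fun n => u - (s n : 𝕜) • x n :=
    funext fun n => hR.apply_eq_sub_smul (hs_pos n) u
  have hlim := tendsto_const_nhds (x := u) |>.sub
    (((continuous_ofReal (K := 𝕜)).tendsto 0).comp hs_lim |>.smul hw)
  rw [hAx]
  simpa using hlim

theorem exists_norm_apply_le_mul [CompleteSpace H] {u : H} (hu : u ∉ range A) {ε : ℝ}
    (hε : 0 < ε) : ∃ γ > 0, ‖A (R γ u)‖ ≤ ε * ‖R γ u‖ := by
  by_contra! h
  refine hu (hR.mem_range_of_norm_le hA (half_pos hε) (C := 2 * ‖u‖ / ε) fun γ ⟨hγ, hγε⟩ => ?_)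
  have hAx : ‖A (R γ u)‖ ≤ ‖u‖ + γ * ‖R γ u‖ := by
    calc ‖A (R γ u)‖ = ‖u - (γ : 𝕜) • R γ u‖ := by rw [hR.apply_eq_sub_smul hγ]
      _ ≤ ‖u‖ + ‖(γ : 𝕜) • R γ u‖ := norm_sub_le _ _
      _ = ‖u‖ + γ * ‖R γ u‖ := by rw [norm_smul, norm_ofReal, abs_of_pos hγ]
  rw [le_div_iff₀ hε]
  nlinarith [h γ hγ, mul_le_mul_of_nonneg_right hγε (norm_nonneg (R γ u))]

theorem tendsto_smul_apply_atTop (u : H) : Tendsto (fun γ : ℝ => (γ : 𝕜) • R γ u) atTop (𝓝 u) := by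
  have heq : ∀ᶠ γ in atTop, u - R γ (A u) = (γ : 𝕜) • R γ u := by
    filter_upwards [eventually_gt_atTop 0] with γ hγ
    rw [sub_eq_iff_eq_add', ← map_smul, ← map_add, hR.map_apply_add_smul hγ]
  have hsmall : Tendsto (fun γ => R γ (A u)) atTop (𝓝 0) := by
    refine squeeze_zero_norm' ?_ ((tendsto_const_nhds (x := ‖A u‖)).div_atTop tendsto_id)
    filter_upwards [eventually_gt_atTop 0] with γ hγ
    exact hR.norm_apply_le_div hA hγ (A u)
  simpa using (tendsto_const_nhds.sub hsmall).congr' heq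

theorem tendsto_norm_apply_div_norm_atTop {u : H} (hu : u ≠ 0) :
    Tendsto (fun γ => ‖A (R γ u)‖ / ‖R γ u‖) atTop (𝓝 (‖A u‖ / ‖u‖)) := by
  have hcont : ContinuousAt (fun v => ‖A v‖ / ‖v‖) u :=
    A.continuous.norm.continuousAt.div continuous_norm.continuousAt (norm_ne_zero_iff.mpr hu)
  refine (hcont.tendsto.comp (hR.tendsto_smul_apply_atTop hA u)).congr' ?_
  filter_upwards [eventually_gt_atTop 0] with γ hγ
  exact A.norm_map_smul_div_norm_smul (ofReal_ne_zero.mpr hγ.ne') _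

end IsResolventFamily

end

theorem accretive_normalized_resolvent_intermediate_value_general
    {𝕜 : Type*} [RCLike 𝕜] {H : Type*} [NormedAddCommGroup H]
    [InnerProductSpace 𝕜 H] [CompleteSpace H]
    (A : H →L[𝕜] H)
    (hacc : ∀ v : H, 0 ≤ RCLike.re (inner 𝕜 (A v) v : 𝕜))
    (R : ℝ → H →L[𝕜] H)
    (hinv : ∀ γ : ℝ, 0 < γ →
      (A + (γ : 𝕜) • (1 : H →L[𝕜] H)).comp (R γ) = 1 ∧
      (R γ).comp (A + (γ : 𝕜) • (1 : H →L[𝕜] H)) = 1)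
    (u : H) (hu_range : u ∉ Set.range A) :
    ∀ ε : ℝ, 0 < ε → ε < ‖A u‖ / ‖u‖ →
      ∃ β : ℝ, 0 < β ∧ ‖A ((‖R β u‖ : 𝕜)⁻¹ • R β u)‖ = ε := by
  intro ε hε hlt
  have hR : IsResolventFamily A R := hinv
  have hu : u ≠ 0 := by
    rintro rfl
    exact hu_range ⟨0, map_zero A⟩
  obtain ⟨β₀, hβ₀, hle⟩ := hR.exists_norm_apply_le_mul hacc hu_range hε
  obtain ⟨β₁, hβ₀₁, hgt⟩ := ((eventually_gt_atTop β₀).and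
    ((hR.tendsto_norm_apply_div_norm_atTop hacc hu).eventually (lt_mem_nhds hlt))).exists
  have hsub : Icc β₀ β₁ ⊆ Ioi 0 := fun γ hγ => hβ₀.trans_le hγ.1
  have hcont : ContinuousOn (fun γ => ‖A (R γ u)‖ / ‖R γ u‖) (Icc β₀ β₁) := by
    have h := (hR.continuousOn_apply u).mono hsub
    exact (A.continuous.comp_continuousOn h).norm.div h.norm
      fun γ hγ => norm_ne_zero_iff.mpr (hR.apply_ne_zero (hsub hγ) hu)
  have hle' : ‖A (R β₀ u)‖ / ‖R β₀ u‖ ≤ ε :=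
    (div_le_iff₀ (norm_pos_iff.mpr (hR.apply_ne_zero hβ₀ hu))).mpr hle
  obtain ⟨β, hβ, hβε⟩ := intermediate_value_Icc hβ₀₁.le hcont ⟨hle', hgt.le⟩
  exact ⟨β, hsub hβ, (A.norm_map_inv_norm_smul _).trans hβε⟩

/-- let `A` be accretive on a Hilbert space `H`, `R γ = (A + γ I)⁻¹`, and
`u ∈ H` with `u ∉ R(A)` and `A u ≠ 0`. Setting `φ_β = (A + β I)⁻¹ u / ‖(A + β I)⁻¹ u‖`,
for every `0 < ε < ‖A u‖ / ‖u‖` there is `β > 0` with `‖A φ_β‖ = ε`. -/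
theorem accretive_normalized_resolvent_intermediate_value
    {𝕜 : Type*} [RCLike 𝕜] {H : Type*} [NormedAddCommGroup H]
    [InnerProductSpace 𝕜 H] [CompleteSpace H]
    (A : H →L[𝕜] H)
    (hacc : ∀ v : H, 0 ≤ RCLike.re (inner 𝕜 (A v) v : 𝕜))
    (R : ℝ → H →L[𝕜] H)
    (hinv : ∀ γ : ℝ, 0 < γ →
      (A + (γ : 𝕜) • (1 : H →L[𝕜] H)).comp (R γ) = 1 ∧
      (R γ).comp (A + (γ : 𝕜) • (1 : H →L[𝕜] H)) = 1)
    (u : H) (hu_range : u ∉ Set.range A) (hu_ker : A u ≠ 0) :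
    ∀ ε : ℝ, 0 < ε → ε < ‖A u‖ / ‖u‖ →
      ∃ β : ℝ, 0 < β ∧ ‖A ((‖R β u‖ : 𝕜)⁻¹ • R β u)‖ = ε :=
  accretive_normalized_resolvent_intermediate_value_general A hacc R hinv u hu_range
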